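/- arXiv:math/9302215 — 4 statements merged into one kernel-verified Lean document; each statement's English description precedes it below -/
import Mathlib

section
/- Let M ⊆ N be von Neumann algebras acting on a Hilbert space H, and let (p_i) be a directed net of projections in M such that p_i x p_i → x in the weak-* (σ(M, M_*)) topology for every x ∈ M. If for each i there exists a norm-one linear projection P_i : N → p_i M p_i, then there exists a norm-one linear projection P : N → M. -/
open scoped InnerProductSpace

open Filter in
set_option maxHeartbeats 1000000 in
/-- Lemma 0.1: if `pᵢ` is a directed net of projections in `M ⊆ N` with `pᵢ x pᵢ → x`
weak-* for every `x ∈ M`, and for each `i` there is a norm-one projection from `N`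
onto `pᵢ M pᵢ`, then there is a norm-one projection from `N` onto `M`. -/
theorem stmt0 {H : Type*} [NormedAddCommGroup H] [InnerProductSpace ℂ H] [CompleteSpace H]
    (M N : VonNeumannAlgebra H) (hMN : ∀ x, x ∈ M → x ∈ N)
    {ι : Type*} [Nonempty ι] [Preorder ι] [IsDirected ι (· ≤ ·)]
    (p : ι → H →L[ℂ] H) (hpM : ∀ i, p i ∈ M)
    (hp : ∀ i, IsIdempotentElem (p i) ∧ IsSelfAdjoint (p i))
    (hconv : ∀ x ∈ M, ∀ ξ η : H,
      Filter.Tendsto (fun i => ⟪(p i * x * p i) ξ, η⟫_ℂ) Filter.atTop (nhds ⟪x ξ, η⟫_ℂ))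
    (hproj : ∀ i, ∃ P : (H →L[ℂ] H) →ₗ[ℂ] (H →L[ℂ] H),
      (∀ x, x ∈ N → ‖P x‖ ≤ ‖x‖) ∧
      (∀ x, x ∈ N → ∃ y ∈ M, P x = p i * y * p i) ∧
      (∀ y, y ∈ M → P (p i * y * p i) = p i * y * p i)) :
    ∃ P : (H →L[ℂ] H) →ₗ[ℂ] (H →L[ℂ] H),
      (∀ x, x ∈ N → P x ∈ M) ∧ (∀ x, x ∈ N → ‖P x‖ ≤ ‖x‖) ∧ (∀ x, x ∈ M → P x = x) := by
  classical
  choose Pi hPnorm hPrange hPfix using hproj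
  -- each `p i` has norm at most one
  have hpnorm : ∀ i, ‖p i‖ ≤ 1 := by
    intro i
    refine ContinuousLinearMap.opNorm_le_bound _ zero_le_one ?_
    intro ξ
    rcases eq_or_ne ‖p i ξ‖ 0 with h0 | h0
    · rw [h0]; positivity
    have hadj : ContinuousLinearMap.adjoint (p i) = p i := by
      have := (hp i).2
      rwa [IsSelfAdjoint, ContinuousLinearMap.star_eq_adjoint] at this
    have hpp : p i (p i ξ) = p i ξ := by
      have h := congrArg (fun T : H →L[ℂ] H => T ξ) (hp i).1
      simpa using h
    have h1 : ⟪p i ξ, p i ξ⟫_ℂ = ⟪ξ, p i ξ⟫_ℂ := by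
      calc ⟪p i ξ, p i ξ⟫_ℂ = ⟪(ContinuousLinearMap.adjoint (p i)) ξ, p i ξ⟫_ℂ := by rw [hadj]
        _ = ⟪ξ, p i (p i ξ)⟫_ℂ := ContinuousLinearMap.adjoint_inner_left _ _ _
        _ = ⟪ξ, p i ξ⟫_ℂ := by rw [hpp]
    have h2 : ‖p i ξ‖ ^ 2 ≤ ‖ξ‖ * ‖p i ξ‖ := by
      have : (‖p i ξ‖ : ℝ) ^ 2 = ‖⟪p i ξ, p i ξ⟫_ℂ‖ := by
        rw [inner_self_eq_norm_sq_to_K]; push_cast; simp [norm_pow]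
      rw [this, h1]
      exact norm_inner_le_norm _ _
    have hpos : 0 < ‖p i ξ‖ := lt_of_le_of_ne (norm_nonneg _) (Ne.symm h0)
    nlinarith
  -- a linear projection `E` onto `N`
  set nsub : Submodule ℂ (H →L[ℂ] H) :=
    Subalgebra.toSubmodule N.toStarSubalgebra.toSubalgebra with hnsub
  obtain ⟨q, hq⟩ := nsub.exists_isCompl
  set E : (H →L[ℂ] H) →ₗ[ℂ] (H →L[ℂ] H) :=
    nsub.subtype ∘ₗ (nsub.linearProjOfIsCompl q hq) with hEdef
  have hEN : ∀ x, E x ∈ N := fun x => (nsub.linearProjOfIsCompl q hq x).2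
  have hE : ∀ x, x ∈ N → E x = x := by
    intro x hx
    have : nsub.linearProjOfIsCompl q hq x = ⟨x, hx⟩ :=
      Submodule.linearProjOfIsCompl_apply_left hq ⟨x, hx⟩
    simp [hEdef, this]
  -- the approximating net
  set f : (H →L[ℂ] H) → ι → (H →L[ℂ] H) := fun x i => Pi i (p i * E x * p i) with hfdef
  have hargN : ∀ x i, p i * E x * p i ∈ N :=
    fun x i => mul_mem (mul_mem (hMN _ (hpM i)) (hEN x)) (hMN _ (hpM i))
  have hfM : ∀ x i, f x i ∈ M := by
    intro x i
    obtain ⟨y, hy, hy2⟩ := hPrange i _ (hargN x i)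
    rw [hfdef]; simp only
    rw [hy2]
    exact mul_mem (mul_mem (hpM i) hy) (hpM i)
  have hfnorm : ∀ x i, ‖f x i‖ ≤ ‖E x‖ := by
    intro x i
    refine le_trans (hPnorm i _ (hargN x i)) ?_
    calc ‖p i * E x * p i‖ ≤ ‖p i * E x‖ * ‖p i‖ := norm_mul_le _ _
      _ ≤ ‖p i‖ * ‖E x‖ * ‖p i‖ :=
          mul_le_mul_of_nonneg_right (norm_mul_le _ _) (norm_nonneg _)
      _ ≤ 1 * ‖E x‖ * 1 := by
          have h1 := hpnorm i
          have h2 := norm_nonneg (E x)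
          have h3 := norm_nonneg (p i)
          nlinarith [mul_nonneg (mul_nonneg h3 h2) h3, mul_le_mul_of_nonneg_right
            (mul_le_mul_of_nonneg_right h1 h2) h3, mul_le_mul_of_nonneg_left h1 h2]
      _ = ‖E x‖ := by ring
  -- linearity of the net in `x`
  have hfadd : ∀ x y i, f (x + y) i = f x i + f y i := by
    intro x y i
    rw [hfdef]; simp only
    rw [map_add, mul_add, add_mul, map_add]
  have hfsmul : ∀ (c : ℂ) x i, f (c • x) i = c • f x i := by
    intro c x i
    rw [hfdef]; simp only
    rw [map_smul, mul_smul_comm, smul_mul_assoc, map_smul]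
  -- ultrafilter refining atTop
  have hne : (atTop : Filter ι).NeBot := atTop_neBot
  set U : Ultrafilter ι := Ultrafilter.of atTop with hUdef
  have hU : (U : Filter ι) ≤ atTop := Ultrafilter.of_le _
  -- the limit form
  set g : (H →L[ℂ] H) → H → H → ι → ℂ := fun x ξ η i => ⟪f x i ξ, η⟫_ℂ with hgdef
  have hgbdd : ∀ x ξ η i, ‖g x ξ η i‖ ≤ ‖E x‖ * ‖ξ‖ * ‖η‖ := by
    intro x ξ η i
    calc ‖⟪f x i ξ, η⟫_ℂ‖ ≤ ‖f x i ξ‖ * ‖η‖ := norm_inner_le_norm _ _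
      _ ≤ ‖f x i‖ * ‖ξ‖ * ‖η‖ := by
          gcongr; exact ContinuousLinearMap.le_opNorm _ _
      _ ≤ ‖E x‖ * ‖ξ‖ * ‖η‖ := by gcongr; exact hfnorm x i
  set B : (H →L[ℂ] H) → H → H → ℂ :=
    fun x ξ η => limUnder (U : Filter ι) (g x ξ η) with hBdef
  have hB : ∀ x ξ η, Tendsto (g x ξ η) (U : Filter ι) (nhds (B x ξ η)) := by
    intro x ξ η
    have hmem : ∀ i, g x ξ η i ∈ Metric.closedBall (0 : ℂ) (‖E x‖ * ‖ξ‖ * ‖η‖) := by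
      intro i
      rw [Metric.mem_closedBall, dist_zero_right]
      exact hgbdd x ξ η i
    have hle : (Ultrafilter.map (g x ξ η) U : Filter ℂ) ≤
        Filter.principal (Metric.closedBall (0 : ℂ) (‖E x‖ * ‖ξ‖ * ‖η‖)) := by
      rw [le_principal_iff]
      exact Filter.mem_map.2 (Filter.univ_mem' hmem)
    obtain ⟨c, _, hc⟩ :=
      (isCompact_closedBall (0 : ℂ) _).ultrafilter_le_nhds (Ultrafilter.map (g x ξ η) U) hle
    have hct : Tendsto (g x ξ η) (U : Filter ι) (nhds c) := hc
    rwa [show B x ξ η = c from hct.limUnder_eq]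
  have hBbd : ∀ x ξ η, ‖B x ξ η‖ ≤ ‖E x‖ * ‖ξ‖ * ‖η‖ := by
    intro x ξ η
    exact le_of_tendsto (hB x ξ η).norm (Filter.Eventually.of_forall (hgbdd x ξ η))
  -- algebraic identities for B via uniqueness of limits
  have huniq : ∀ x ξ η (c : ℂ), Tendsto (g x ξ η) (U : Filter ι) (nhds c) → B x ξ η = c :=
    fun x ξ η c hc => tendsto_nhds_unique (hB x ξ η) hc
  -- build the operator
  have key : ∀ x : H →L[ℂ] H, ∃ T : H →L[ℂ] H,
      (∀ ξ η, ⟪T ξ, η⟫_ℂ = B x ξ η) ∧ ‖T‖ ≤ ‖E x‖ := by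
    intro x
    have hφbound : ∀ ξ η, ‖B x ξ η‖ ≤ ‖E x‖ * ‖ξ‖ * ‖η‖ := hBbd x
    -- for fixed ξ, η ↦ B x ξ η is a bounded linear functional
    have φ : ∀ ξ : H, ∃ φ : H →L[ℂ] ℂ, (∀ η, φ η = B x ξ η) ∧ ‖φ‖ ≤ ‖E x‖ * ‖ξ‖ := by
      intro ξ
      set L : H →ₗ[ℂ] ℂ :=
        { toFun := fun η => B x ξ η
          map_add' := by
            intro η η'
            refine (huniq x ξ (η + η') _ ?_).trans rfl
            have : g x ξ (η + η') = fun i => g x ξ η i + g x ξ η' i := by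
              funext i; rw [hgdef]; simp [inner_add_right]
            rw [this]
            exact (hB x ξ η).add (hB x ξ η')
          map_smul' := by
            intro c η
            refine (huniq x ξ (c • η) _ ?_).trans rfl
            have : g x ξ (c • η) = fun i => c * g x ξ η i := by
              funext i; rw [hgdef]; simp [inner_smul_right]
            rw [this]
            exact (hB x ξ η).const_mul c } with hLdef
      have hLb : ∀ η, ‖L η‖ ≤ (‖E x‖ * ‖ξ‖) * ‖η‖ := by
        intro η
        rw [hLdef]
        simpa [mul_assoc] using hφbound ξ η
      refine ⟨L.mkContinuous (‖E x‖ * ‖ξ‖) hLb, fun η => rfl,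
        L.mkContinuous_norm_le (by positivity) hLb⟩
    choose φ hφ hφnorm using φ
    set v : H → H := fun ξ => (InnerProductSpace.toDual ℂ H).symm (φ ξ) with hvdef
    have hv : ∀ ξ η, ⟪v ξ, η⟫_ℂ = B x ξ η := by
      intro ξ η
      rw [hvdef]
      simp only
      rw [InnerProductSpace.toDual_symm_apply]
      exact hφ ξ η
    have hvadd : ∀ ξ ξ', v (ξ + ξ') = v ξ + v ξ' := by
      intro ξ ξ'
      refine ext_inner_right ℂ fun η => ?_
      rw [hv, inner_add_left, hv, hv]
      refine (huniq x (ξ + ξ') η _ ?_)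
      have : g x (ξ + ξ') η = fun i => g x ξ η i + g x ξ' η i := by
        funext i; rw [hgdef]; simp [inner_add_left]
      rw [this]
      exact (hB x ξ η).add (hB x ξ' η)
    have hvsmul : ∀ (c : ℂ) ξ, v (c • ξ) = c • v ξ := by
      intro c ξ
      refine ext_inner_right ℂ fun η => ?_
      rw [hv, inner_smul_left, hv]
      refine (huniq x (c • ξ) η _ ?_)
      have : g x (c • ξ) η = fun i => (starRingEnd ℂ) c * g x ξ η i := by
        funext i; rw [hgdef]; simp [inner_smul_left]; ring
      rw [this]
      exact (hB x ξ η).const_mul _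
    set T : H →ₗ[ℂ] H := { toFun := v, map_add' := hvadd, map_smul' := hvsmul } with hTdef
    have hTb : ∀ ξ, ‖T ξ‖ ≤ ‖E x‖ * ‖ξ‖ := by
      intro ξ
      have : ‖T ξ‖ = ‖φ ξ‖ := by
        rw [hTdef]; simp only [LinearMap.coe_mk, AddHom.coe_mk]
        rw [hvdef]
        exact LinearIsometryEquiv.norm_map _ _
      rw [this]
      exact hφnorm ξ
    refine ⟨T.mkContinuous ‖E x‖ hTb, fun ξ η => hv ξ η,
      T.mkContinuous_norm_le (norm_nonneg _) hTb⟩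
  choose T hT hTnorm using key
  -- P as a linear map
  set P : (H →L[ℂ] H) →ₗ[ℂ] (H →L[ℂ] H) :=
    { toFun := T
      map_add' := by
        intro x y
        refine ContinuousLinearMap.ext fun ξ => ext_inner_right ℂ fun η => ?_
        rw [ContinuousLinearMap.add_apply, inner_add_left, hT, hT, hT]
        refine huniq (x + y) ξ η _ ?_
        have : g (x + y) ξ η = fun i => g x ξ η i + g y ξ η i := by
          funext i; rw [hgdef]; simp only
          rw [hfadd, ContinuousLinearMap.add_apply, inner_add_left]
        rw [this]
        exact (hB x ξ η).add (hB y ξ η)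
      map_smul' := by
        intro c x
        refine ContinuousLinearMap.ext fun ξ => ext_inner_right ℂ fun η => ?_
        rw [RingHom.id_apply, ContinuousLinearMap.smul_apply, inner_smul_left, hT, hT]
        refine huniq (c • x) ξ η _ ?_
        have : g (c • x) ξ η = fun i => (starRingEnd ℂ) c * g x ξ η i := by
          funext i; rw [hgdef]; simp only
          rw [hfsmul, ContinuousLinearMap.smul_apply, inner_smul_left]
        rw [this]
        exact (hB x ξ η).const_mul _ } with hPdef
  refine ⟨P, ?_, ?_, ?_⟩
  · -- range in M, via double commutant
    intro x hx
    have hPx : P x = T x := rfl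
    rw [hPx, ← SetLike.mem_coe, ← M.centralizer_centralizer]
    intro c hc
    refine ContinuousLinearMap.ext fun ξ => ext_inner_right ℂ fun η => ?_
    have hcomm : ∀ i, c * f x i = f x i * c := fun i => (hc (f x i) (hfM x i)).symm
    have lhs : (c * T x) ξ = c (T x ξ) := rfl
    rw [ContinuousLinearMap.mul_apply, ContinuousLinearMap.mul_apply]
    have h1 : ⟪c (T x ξ), η⟫_ℂ = ⟪T x ξ, ContinuousLinearMap.adjoint c η⟫_ℂ :=
      (ContinuousLinearMap.adjoint_inner_right c _ _).symm
    rw [h1, hT, hT]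
    refine (huniq x ξ (ContinuousLinearMap.adjoint c η) _ ?_).trans
      (huniq x (c ξ) η _ (hB x (c ξ) η)).symm ▸ ?_
    · have : g x ξ (ContinuousLinearMap.adjoint c η) = g x (c ξ) η := by
        funext i
        rw [hgdef]; simp only
        rw [ContinuousLinearMap.adjoint_inner_right]
        have : c (f x i ξ) = f x i (c ξ) := by
          have := congrArg (fun T : H →L[ℂ] H => T ξ) (hcomm i)
          simpa using this
        rw [this]
      rw [this]
      exact hB x (c ξ) η
    · rfl
  · -- norm bound
    intro x hx
    have hPx : P x = T x := rfl
    rw [hPx]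
    calc ‖T x‖ ≤ ‖E x‖ := hTnorm x
      _ = ‖x‖ := by rw [hE x hx]
  · -- fixes M
    intro x hx
    have hxN : x ∈ N := hMN x hx
    have hPx : P x = T x := rfl
    rw [hPx]
    refine ContinuousLinearMap.ext fun ξ => ext_inner_right ℂ fun η => ?_
    rw [hT]
    refine huniq x ξ η _ ?_
    have hfix : ∀ i, f x i = p i * x * p i := by
      intro i
      rw [hfdef]; simp only
      rw [hE x hxN]
      exact hPfix i x hx
    have : g x ξ η = fun i => ⟪(p i * x * p i) ξ, η⟫_ℂ := by
      funext i; rw [hgdef]; simp only [hfix i]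
    rw [this]
    exact (hconv x hx ξ η).mono_left hU
end

section
/- Let W : 𝕋 → B(H) be weakly integrable with W(t) ≥ δ·I for some δ > 0, and suppose F : D → B(H) is the (unique) outer analytic factorization with F(0) ≥ 0, boundary values satisfying ⟨W(t)x, y⟩ = ⟨F(t)x, F(t)y⟩ a.e., and F(z)^{-1} bounded analytic. If N ⊆ B(H) is a von Neumann algebra and W takes values in N, then F takes values in N. -/
set_option synthInstance.maxHeartbeats 1000000
set_option maxHeartbeats 1000000

open scoped InnerProductSpace
open NormedSpace

/-- The Szegő–Devinatz outer factorization property: `F` is analytic and bounded on the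
open unit disc with bounded analytic inverse, `F(0) ≥ 0`, and its radial boundary values
`Fb` satisfy `⟨W(t)x, y⟩ = ⟨F(t)x, F(t)y⟩` almost everywhere. -/
def IsOuterFactorization {H : Type*} [NormedAddCommGroup H] [InnerProductSpace ℂ H]
    [CompleteSpace H] (W : ℝ → (H →L[ℂ] H)) (F : ℂ → (H →L[ℂ] H)) : Prop :=
  DifferentiableOn ℂ F (Metric.ball (0 : ℂ) 1) ∧
  (∃ C : ℝ, ∀ z ∈ Metric.ball (0 : ℂ) 1, ‖F z‖ ≤ C) ∧
  (F 0).IsPositive ∧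
  (∃ Finv : ℂ → (H →L[ℂ] H), DifferentiableOn ℂ Finv (Metric.ball (0 : ℂ) 1) ∧
    (∃ C : ℝ, ∀ z ∈ Metric.ball (0 : ℂ) 1, ‖Finv z‖ ≤ C) ∧
    ∀ z ∈ Metric.ball (0 : ℂ) 1, F z * Finv z = 1 ∧ Finv z * F z = 1) ∧
  (∃ Fb : ℝ → (H →L[ℂ] H),
    (∀ᵐ t : ℝ, ∀ x : H,
      Filter.Tendsto (fun r : ℝ => F ((r : ℂ) * Complex.exp (t * Complex.I)) x)
        (nhdsWithin 1 (Set.Iio 1)) (nhds (Fb t x))) ∧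
    (∀ᵐ t : ℝ, ∀ x y : H, ⟪W t x, y⟫_ℂ = ⟪Fb t x, Fb t y⟫_ℂ))

lemma conj_outer {H : Type*} [NormedAddCommGroup H] [InnerProductSpace ℂ H] [CompleteSpace H]
    (N : VonNeumannAlgebra H) (W : ℝ → (H →L[ℂ] H)) (F : ℂ → (H →L[ℂ] H))
    (hF : IsOuterFactorization W F) (hWN : ∀ t : ℝ, W t ∈ N)
    (u : H →L[ℂ] H) (hm : u ∈ N.commutant) (hu : u ∈ unitary (H →L[ℂ] H)) :
    IsOuterFactorization W (fun w => star u * F w * u) := by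
  obtain ⟨hFd, ⟨C, hC⟩, hFpos, ⟨Fi, hFid, ⟨Ci, hCi⟩, hFi⟩, ⟨Fb, hFb1, hFb2⟩⟩ := hF
  obtain ⟨h1, h2⟩ := Unitary.mem_iff.mp hu
  have happ : ∀ (A B : H →L[ℂ] H) (x : H), (A * B) x = A (B x) := fun _ _ _ => rfl
  have hid : ∀ b : H, u ((star u) b) = b := by
    intro b; rw [← happ, h2, ContinuousLinearMap.one_apply]
  have hinner : ∀ a b : H, ⟪(star u) a, (star u) b⟫_ℂ = ⟪a, b⟫_ℂ := by
    intro a b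
    rw [ContinuousLinearMap.star_eq_adjoint, ContinuousLinearMap.adjoint_inner_left,
      ← ContinuousLinearMap.star_eq_adjoint, hid]
  refine ⟨?_, ⟨‖star u‖ * C * ‖u‖, ?_⟩, ?_,
    ⟨fun w => star u * Fi w * u, ?_, ⟨‖star u‖ * Ci * ‖u‖, ?_⟩, ?_⟩,
    ⟨fun t => star u * Fb t * u, ?_, ?_⟩⟩
  · exact ((differentiableOn_const (star u)).mul hFd).mul (differentiableOn_const u)
  · intro w hw
    calc ‖star u * F w * u‖ ≤ ‖star u * F w‖ * ‖u‖ := norm_mul_le _ _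
      _ ≤ ‖star u‖ * ‖F w‖ * ‖u‖ :=
        mul_le_mul_of_nonneg_right (norm_mul_le _ _) (norm_nonneg _)
      _ ≤ ‖star u‖ * C * ‖u‖ := by
        have := hC w hw
        gcongr
  · have h := hFpos.adjoint_conj u
    simpa [ContinuousLinearMap.star_eq_adjoint, ContinuousLinearMap.mul_def, mul_assoc, ContinuousLinearMap.comp_assoc] using h
  · exact ((differentiableOn_const (star u)).mul hFid).mul (differentiableOn_const u)
  · intro w hw
    calc ‖star u * Fi w * u‖ ≤ ‖star u * Fi w‖ * ‖u‖ := norm_mul_le _ _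
      _ ≤ ‖star u‖ * ‖Fi w‖ * ‖u‖ :=
        mul_le_mul_of_nonneg_right (norm_mul_le _ _) (norm_nonneg _)
      _ ≤ ‖star u‖ * Ci * ‖u‖ := by
        have := hCi w hw
        gcongr
  · intro w hw
    obtain ⟨p, q⟩ := hFi w hw
    constructor
    · simp only [mul_assoc]
      rw [← mul_assoc u (star u) (Fi w * u), h2, one_mul, ← mul_assoc (F w) (Fi w) u, p,
        one_mul, h1]
    · simp only [mul_assoc]
      rw [← mul_assoc u (star u) (F w * u), h2, one_mul, ← mul_assoc (Fi w) (F w) u, q,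
        one_mul, h1]
  · filter_upwards [hFb1] with t ht
    intro x
    have := ((star u).continuous.tendsto (Fb t (u x))).comp (ht (u x))
    simpa only [ContinuousLinearMap.mul_apply, Function.comp_def] using this
  · filter_upwards [hFb2] with t ht
    intro x y
    have hWu : star u * W t * u = W t := by
      have hcomm : W t * u = u * W t := VonNeumannAlgebra.mem_commutant_iff.mp hm (W t) (hWN t)
      rw [mul_assoc, hcomm, ← mul_assoc, h1, one_mul]
    calc ⟪W t x, y⟫_ℂ = ⟪(star u * W t * u) x, y⟫_ℂ := by rw [hWu]
      _ = ⟪W t (u x), u y⟫_ℂ := by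
        rw [happ, happ, ContinuousLinearMap.star_eq_adjoint,
          ContinuousLinearMap.adjoint_inner_left]
      _ = ⟪Fb t (u x), Fb t (u y)⟫_ℂ := ht (u x) (u y)
      _ = ⟪(star u) (Fb t (u x)), (star u) (Fb t (u y))⟫_ℂ := (hinner _ _).symm
      _ = ⟪(star u * Fb t * u) x, (star u * Fb t * u) y⟫_ℂ := by rw [happ, happ, happ, happ]

/-- Corollary 2.3: if `W` takes values in a von Neumann algebra `N` and `F` is the unique
outer factorization of `W`, then `F` takes values in `N`. -/
theorem stmt11 {H : Type*} [NormedAddCommGroup H] [InnerProductSpace ℂ H] [CompleteSpace H]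
    (N : VonNeumannAlgebra H) (W : ℝ → (H →L[ℂ] H)) (F : ℂ → (H →L[ℂ] H)) (δ : ℝ) (hδ : 0 < δ)
    (hint : ∀ x y : H, MeasureTheory.IntegrableOn (fun t : ℝ => ⟪W t x, y⟫_ℂ)
      (Set.Icc 0 (2 * Real.pi)))
    (hWδ : ∀ t : ℝ, ((W t) - δ • (1 : H →L[ℂ] H)).IsPositive)
    (hF : IsOuterFactorization W F)
    (huniq : ∀ G : ℂ → (H →L[ℂ] H), IsOuterFactorization W G → ∀ z ∈ Metric.ball (0 : ℂ) 1, G z = F z)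
    (hWN : ∀ t : ℝ, W t ∈ N) :
    ∀ z ∈ Metric.ball (0 : ℂ) 1, F z ∈ N := by
  intro z hz
  -- Step 1: F z commutes with every unitary of the commutant.
  have key_u : ∀ u : H →L[ℂ] H, u ∈ N.commutant → u ∈ unitary (H →L[ℂ] H) →
      F z * u = u * F z := by
    intro u hm hu
    obtain ⟨h1, h2⟩ := Unitary.mem_iff.mp hu
    have hG := huniq _ (conj_outer N W F hF hWN u hm hu) z hz
    have : u * F z = F z * u := by
      conv_lhs => rw [← hG]
      rw [← mul_assoc, ← mul_assoc, h2, one_mul]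
    exact this.symm
  -- Step 2: F z commutes with every self-adjoint element of the commutant.
  have key_sa : ∀ a : H →L[ℂ] H, a ∈ N.commutant → IsSelfAdjoint a →
      F z * a = a * F z := by
    intro a hamem ha
    have hxskew : ∀ t : ℝ, (t • (Complex.I • a)) ∈ skewAdjoint (H →L[ℂ] H) := by
      intro t
      rw [skewAdjoint.mem_iff]
      rw [star_smul, star_smul, Complex.star_def, Complex.conj_I, ha.star_eq]
      rw [neg_smul, smul_neg, star_trivial]
    have hmemexp : ∀ t : ℝ, exp (t • (Complex.I • a)) ∈ N.commutant := by
      intro t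
      rw [VonNeumannAlgebra.mem_commutant_iff]
      intro g hg
      have hga : Commute g a := VonNeumannAlgebra.mem_commutant_iff.mp hamem g hg
      exact ((hga.smul_right Complex.I).smul_right t).exp_right
    have hexp_uni : ∀ t : ℝ, exp (t • (Complex.I • a)) ∈ unitary (H →L[ℂ] H) := by
      intro t
      letI : NormedAlgebra ℚ (H →L[ℂ] H) := .restrictScalars ℚ ℂ _
      exact exp_mem_unitary_of_mem_skewAdjoint (hxskew t)
    have hE : HasDerivAt (fun t : ℝ => exp (t • (Complex.I • a))) (Complex.I • a) 0 := by
      simpa using hasDerivAt_exp_smul_const (𝕂 := ℝ) (Complex.I • a) (0 : ℝ)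
    have h1' : HasDerivAt (fun t : ℝ => F z * exp (t • (Complex.I • a)))
        (F z * (Complex.I • a)) 0 := hE.const_mul (F z)
    have h2' : HasDerivAt (fun t : ℝ => exp (t • (Complex.I • a)) * F z)
        ((Complex.I • a) * F z) 0 := hE.mul_const (F z)
    have hfun : (fun t : ℝ => F z * exp (t • (Complex.I • a)))
        = fun t : ℝ => exp (t • (Complex.I • a)) * F z :=
      funext fun t => key_u _ (hmemexp t) (hexp_uni t)
    rw [hfun] at h1'
    have heq : F z * (Complex.I • a) = (Complex.I • a) * F z := h1'.unique h2'
    rw [mul_smul_comm, smul_mul_assoc] at heq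
    exact smul_right_injective (H →L[ℂ] H) Complex.I_ne_zero heq
  -- Step 3: conclude via the bicommutant.
  rw [← VonNeumannAlgebra.commutant_commutant N]
  rw [VonNeumannAlgebra.mem_commutant_iff]
  intro g hg
  set b : H →L[ℂ] H := (2⁻¹ : ℂ) • (g + star g) with hb_def
  set c : H →L[ℂ] H := (-(Complex.I / 2)) • (g - star g) with hc_def
  have hgmem' : star g ∈ N.commutant := star_mem hg
  have hsmul : ∀ (r : ℂ) (x : H →L[ℂ] H), x ∈ N.commutant → r • x ∈ N.commutant := by
    intro r x hx
    rw [VonNeumannAlgebra.mem_commutant_iff] at hx ⊢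
    intro g' hg'
    rw [mul_smul_comm, smul_mul_assoc, hx g' hg']
  have hbmem : b ∈ N.commutant := hsmul _ _ (add_mem hg hgmem')
  have hcmem : c ∈ N.commutant := hsmul _ _ (sub_mem hg hgmem')
  have hbsa : IsSelfAdjoint b := by
    rw [IsSelfAdjoint, hb_def, star_smul, star_add, star_star]
    simp [add_comm]
  have hcsa : IsSelfAdjoint c := by
    rw [IsSelfAdjoint, hc_def, star_smul, star_sub, star_star]
    rw [show (star (-(Complex.I / 2)) : ℂ) = Complex.I / 2 by
      rw [Complex.star_def, map_neg, map_div₀, Complex.conj_I, map_ofNat]; ring]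
    rw [show (star g - g) = -(g - star g) by abel]
    rw [smul_neg, ← neg_smul]
  have hg_eq : g = b + Complex.I • c := by
    rw [hb_def, hc_def, smul_smul]
    rw [show Complex.I * -(Complex.I / 2) = (2⁻¹ : ℂ) by
      rw [mul_neg, ← mul_div_assoc, Complex.I_mul_I]; norm_num]
    rw [← smul_add]
    rw [show (g + star g) + (g - star g) = (2 : ℂ) • g by rw [two_smul]; abel]
    rw [smul_smul]
    norm_num
  have hbc : Commute b (F z) := (key_sa b hbmem hbsa).symm
  have hcc : Commute c (F z) := (key_sa c hcmem hcsa).symm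
  have hfin : Commute g (F z) := by
    rw [hg_eq]
    exact hbc.add_left (hcc.smul_left Complex.I)
  exact hfin
end

section
/- Let b_1, …, b_n be N×N complex matrices such that |∑ tr(b_i a_i)| ≤ 1 for all matrices a_1, …, a_n with ‖∑ a_i a_i*‖ ≤ 1. Then tr((∑ b_i* b_i)^{1/2}) ≤ 1. -/
open Matrix
open scoped ComplexOrder
open scoped Matrix.Norms.L2Operator

/-- If `|∑ tr(bᵢ aᵢ)| ≤ 1` whenever `‖∑ aᵢ aᵢ*‖ ≤ 1` (operator norm), then
`tr((∑ bᵢ* bᵢ)^{1/2}) ≤ 1`, where the square root is the positive semidefinite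
square root of `∑ bᵢ* bᵢ`. -/
theorem stmt17 {N : ℕ} (n : ℕ) (b : Fin n → Matrix (Fin N) (Fin N) ℂ)
    (h : ∀ a : Fin n → Matrix (Fin N) (Fin N) ℂ,
      ‖∑ i, a i * (a i)ᴴ‖ ≤ 1 → ‖∑ i, Matrix.trace (b i * a i)‖ ≤ 1) :
    ∀ s : Matrix (Fin N) (Fin N) ℂ, s.PosSemidef → s * s = ∑ i, (b i)ᴴ * b i →
      (Matrix.trace s).re ≤ 1 := by
  intro s hs hsq
  have hherm : s.IsHermitian := hs.1
  set U : Matrix (Fin N) (Fin N) ℂ := (hherm.eigenvectorUnitary : Matrix (Fin N) (Fin N) ℂ)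
    with hU
  set d : Fin N → ℝ := hherm.eigenvalues with hd
  have hU1 : Uᴴ * U = 1 := by
    rw [← Matrix.star_eq_conjTranspose]
    exact Unitary.coe_star_mul_self hherm.eigenvectorUnitary
  -- conjugated diagonal multiplication
  have conj_mul : ∀ f g : Fin N → ℂ,
      (U * diagonal f * Uᴴ) * (U * diagonal g * Uᴴ) = U * diagonal (fun i => f i * g i) * Uᴴ := by
    intro f g
    calc (U * diagonal f * Uᴴ) * (U * diagonal g * Uᴴ)
        = U * diagonal f * (Uᴴ * U) * diagonal g * Uᴴ := by
          simp only [Matrix.mul_assoc]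
      _ = U * (diagonal f * diagonal g) * Uᴴ := by
          rw [hU1]; simp [Matrix.mul_assoc]
      _ = U * diagonal (fun i => f i * g i) * Uᴴ := by
          rw [diagonal_mul_diagonal]
  have hspec : s = U * diagonal (fun i => (d i : ℂ)) * Uᴴ := by
    have := hherm.spectral_theorem
    rw [Unitary.conjStarAlgAut_apply] at this
    rw [← Matrix.star_eq_conjTranspose]
    exact this
  -- pseudo-inverse of eigenvalues
  set g : Fin N → ℂ := fun i => if d i = 0 then 0 else (d i : ℂ)⁻¹ with hg
  set t : Matrix (Fin N) (Fin N) ℂ := U * diagonal g * Uᴴ with ht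
  have hgstar : star g = g := by
    funext i
    by_cases hdi : d i = 0 <;> simp [hg, hdi, ← Complex.ofReal_inv]
  have htherm : tᴴ = t := by
    rw [ht, Matrix.conjTranspose_mul, Matrix.conjTranspose_mul,
      Matrix.conjTranspose_conjTranspose, Matrix.diagonal_conjTranspose, hgstar,
      Matrix.mul_assoc]
  set a : Fin n → Matrix (Fin N) (Fin N) ℂ := fun i => t * (b i)ᴴ with ha
  set p : Fin N → ℂ := fun i => if d i = 0 then 0 else 1 with hp
  -- the sum ∑ aᵢ aᵢᴴ is t * s² * t, a projection
  have hsum : ∑ i, a i * (a i)ᴴ = U * diagonal p * Uᴴ := by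
    have h1 : ∑ i, a i * (a i)ᴴ = t * (s * s) * t := by
      rw [hsq, Finset.mul_sum, Finset.sum_mul]
      refine Finset.sum_congr rfl fun i _ => ?_
      rw [ha]
      simp only [Matrix.conjTranspose_mul, Matrix.conjTranspose_conjTranspose, htherm,
        Matrix.mul_assoc]
    rw [h1, ht, hspec, Matrix.mul_assoc (U * diagonal g * Uᴴ), conj_mul, conj_mul, conj_mul]
    have : (fun i => g i * ((d i : ℂ) * (d i : ℂ) * g i)) = p := by
      funext i
      by_cases hdi : d i = 0
      · simp [hg, hp, hdi]
      · have : (d i : ℂ) ≠ 0 := by exact_mod_cast hdi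
        simp [hg, hp, hdi]
    rw [this]
  have hpstar : star p = p := by
    funext i; by_cases hdi : d i = 0 <;> simp [hp, hdi]
  have hpsq : (fun i => p i * p i) = p := by
    funext i; by_cases hdi : d i = 0 <;> simp [hp, hdi]
  have hmherm : (U * diagonal p * Uᴴ)ᴴ = U * diagonal p * Uᴴ := by
    rw [Matrix.conjTranspose_mul, Matrix.conjTranspose_mul,
      Matrix.conjTranspose_conjTranspose, Matrix.diagonal_conjTranspose, hpstar,
      Matrix.mul_assoc]
  have hmidem : (U * diagonal p * Uᴴ) * (U * diagonal p * Uᴴ) = U * diagonal p * Uᴴ := by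
    rw [conj_mul, hpsq]
  have hnorm : ‖∑ i, a i * (a i)ᴴ‖ ≤ 1 := by
    rw [hsum]
    have h1 : ‖U * diagonal p * Uᴴ‖ * ‖U * diagonal p * Uᴴ‖ = ‖U * diagonal p * Uᴴ‖ := by
      rw [← Matrix.l2_opNorm_conjTranspose_mul_self (U * diagonal p * Uᴴ), hmherm, hmidem]
    nlinarith [norm_nonneg (U * diagonal p * Uᴴ), h1]
  have hab := h a hnorm
  -- compute the trace sum
  have htr : ∑ i, Matrix.trace (b i * a i) = Matrix.trace s := by
    have h2 : ∑ i, Matrix.trace (b i * a i) = Matrix.trace (t * (s * s)) := by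
      rw [hsq, Finset.mul_sum, Matrix.trace_sum]
      refine Finset.sum_congr rfl fun i _ => ?_
      rw [ha, Matrix.trace_mul_comm, Matrix.mul_assoc]
    rw [h2]
    have h3 : t * (s * s) = s := by
      rw [ht]
      conv_lhs => rw [hspec]
      conv_rhs => rw [hspec]
      rw [conj_mul, conj_mul]
      have : (fun i => g i * ((d i : ℂ) * (d i : ℂ))) = fun i => (d i : ℂ) := by
        funext i
        by_cases hdi : d i = 0
        · simp [hg, hdi]
        · have : (d i : ℂ) ≠ 0 := by exact_mod_cast hdi
          simp [hg, hdi]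
      rw [this]
    rw [h3]
  rw [htr] at hab
  calc (Matrix.trace s).re ≤ ‖Matrix.trace s‖ := Complex.re_le_norm _
    _ ≤ 1 := hab
end

section
/- Let b_1, …, b_n be N×N matrices, δ > 0, α = ((∑ b_i b_i*)^{1/2} + δ·I)^{1/4}, β = ((∑ b_i* b_i)^{1/2} + δ·I)^{1/4}. Then there exist matrices y_1, …, y_n with b_i = α y_i β for all i and ∑ tr(y_i* y_i) ≤ max(tr((∑ b_i b_i*)^{1/2}), tr((∑ b_i* b_i)^{1/2})). -/
open Matrix
open scoped ComplexOrder

lemma aux_trace_re_nonneg {N : ℕ} {M : Matrix (Fin N) (Fin N) ℂ} (hM : M.PosSemidef) :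
    0 ≤ (Matrix.trace M).re := by
  rw [Matrix.trace, Complex.re_sum]
  refine Finset.sum_nonneg fun i _ => ?_
  have h := hM.re_dotProduct_nonneg (Pi.single i 1)
  simpa [Matrix.mulVec_single, dotProduct, Pi.single_apply, Finset.sum_ite_eq,
    apply_ite] using h

lemma aux_half {N : ℕ} (X Y : Matrix (Fin N) (Fin N) ℂ) :
    (Matrix.trace (Xᴴ * Y)).re ≤
      ((Matrix.trace (Xᴴ * X)).re + (Matrix.trace (Yᴴ * Y)).re) / 2 := by
  have h0 := aux_trace_re_nonneg (Matrix.posSemidef_conjTranspose_mul_self (X - Y))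
  have e : (X - Y)ᴴ * (X - Y) = Xᴴ * X - Xᴴ * Y - Yᴴ * X + Yᴴ * Y := by
    rw [conjTranspose_sub]; noncomm_ring
  rw [e] at h0
  simp only [Matrix.trace_add, Matrix.trace_sub, Complex.add_re, Complex.sub_re] at h0
  have e2 : (Matrix.trace (Yᴴ * X)).re = (Matrix.trace (Xᴴ * Y)).re := by
    have : Yᴴ * X = (Xᴴ * Y)ᴴ := by simp [conjTranspose_mul]
    rw [this, Matrix.trace_conjTranspose]
    simp [Complex.star_def]
  linarith

lemma aux_key {N : ℕ} {s α : Matrix (Fin N) (Fin N) ℂ} {δ : ℝ} (hδ : 0 < δ)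
    (hs : s.PosSemidef) (hα : α.PosSemidef) (hdet : IsUnit α.det)
    (hα4 : α ^ 4 = s + (δ : ℂ) • (1 : Matrix (Fin N) (Fin N) ℂ)) :
    (Matrix.trace ((α⁻¹) ^ 4 * (s * s))).re ≤ (Matrix.trace s).re := by
  set A4 := (α⁻¹) ^ 4 with hA4def
  have hc : Commute α⁻¹ α := by
    unfold Commute SemiconjBy
    rw [nonsing_inv_mul α hdet, mul_nonsing_inv α hdet]
  have hinv : A4 * α ^ 4 = 1 := by
    rw [hA4def, ← hc.mul_pow, nonsing_inv_mul α hdet, one_pow]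
  have hexp : (1 : Matrix (Fin N) (Fin N) ℂ) = A4 * s + (δ : ℂ) • A4 := by
    rw [← hinv, hα4, mul_add, Matrix.mul_smul, mul_one]
  have htr : Matrix.trace s = Matrix.trace (A4 * (s * s)) + (δ : ℂ) * Matrix.trace (A4 * s) := by
    conv_lhs => rw [← one_mul s, hexp]
    rw [add_mul, smul_mul_assoc, Matrix.trace_add, Matrix.trace_smul, mul_assoc, smul_eq_mul]
  have h2 : 0 ≤ (Matrix.trace (A4 * s)).re := by
    obtain ⟨B, hB⟩ : ∃ B : Matrix (Fin N) (Fin N) ℂ, s = Bᴴ * B := by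
      open scoped MatrixOrder Matrix.Norms.L2Operator in
      exact CStarAlgebra.nonneg_iff_eq_star_mul_self.mp hs.nonneg
    have hps : (B * A4 * Bᴴ).PosSemidef := (hα.inv.pow 4).mul_mul_conjTranspose_same B
    have h := aux_trace_re_nonneg hps
    have e : Matrix.trace (B * A4 * Bᴴ) = Matrix.trace (A4 * s) := by
      rw [hB, ← mul_assoc, mul_assoc B A4 Bᴴ]; exact Matrix.trace_mul_comm _ _
    rwa [e] at h
  have := congrArg Complex.re htr
  rw [Complex.add_re, Complex.mul_re, Complex.ofReal_re, Complex.ofReal_im, zero_mul,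
    sub_zero] at this
  nlinarith

set_option maxHeartbeats 1000000 in
/-- With `α = ((∑ bᵢ bᵢ*)^{1/2} + δ·I)^{1/4}` and `β = ((∑ bᵢ* bᵢ)^{1/2} + δ·I)^{1/4}`
(described via their positive semidefinite powers), there exist matrices `yᵢ` with
`bᵢ = α yᵢ β` and `∑ tr(yᵢ* yᵢ) ≤ max(tr((∑ bᵢ bᵢ*)^{1/2}), tr((∑ bᵢ* bᵢ)^{1/2}))`. -/
theorem stmt19 {N : ℕ} (n : ℕ) (b : Fin n → Matrix (Fin N) (Fin N) ℂ) (δ : ℝ) (hδ : 0 < δ)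
    (sr sc α β : Matrix (Fin N) (Fin N) ℂ)
    (hsr : sr.PosSemidef) (hsr2 : sr * sr = ∑ i, b i * (b i)ᴴ)
    (hsc : sc.PosSemidef) (hsc2 : sc * sc = ∑ i, (b i)ᴴ * b i)
    (hα : α.PosSemidef) (hα4 : α ^ 4 = sr + (δ : ℂ) • (1 : Matrix (Fin N) (Fin N) ℂ))
    (hβ : β.PosSemidef) (hβ4 : β ^ 4 = sc + (δ : ℂ) • (1 : Matrix (Fin N) (Fin N) ℂ)) :
    ∃ y : Fin n → Matrix (Fin N) (Fin N) ℂ,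
      (∀ i, b i = α * y i * β) ∧
      (∑ i, (Matrix.trace ((y i)ᴴ * y i)).re) ≤
        max (Matrix.trace sr).re (Matrix.trace sc).re := by
  have hδ1 : ((δ : ℂ) • (1 : Matrix (Fin N) (Fin N) ℂ)).PosDef := by
    rw [smul_one_eq_diagonal]
    exact Matrix.PosDef.diagonal fun i => Complex.zero_lt_real.mpr hδ
  have hdet : ∀ (γ s : Matrix (Fin N) (Fin N) ℂ), s.PosSemidef →
      γ ^ 4 = s + (δ : ℂ) • (1 : Matrix (Fin N) (Fin N) ℂ) → IsUnit γ.det := by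
    intro γ s hs h4
    have hpd : (γ ^ 4).PosDef := by rw [h4]; exact Matrix.PosDef.posSemidef_add hs hδ1
    have hγ := hpd.det_pos
    rw [det_pow] at hγ
    have : γ.det ≠ 0 := fun h => by simp [h] at hγ
    exact this.isUnit
  have hαdet : IsUnit α.det := hdet α sr hsr hα4
  have hβdet : IsUnit β.det := hdet β sc hsc hβ4
  have eα : (α⁻¹)ᴴ = α⁻¹ := hα.isHermitian.inv
  have eβ : (β⁻¹)ᴴ = β⁻¹ := hβ.isHermitian.inv
  refine ⟨fun i => α⁻¹ * b i * β⁻¹, fun i => ?_, ?_⟩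
  · have e : α * (α⁻¹ * b i * β⁻¹) * β = (α * α⁻¹) * b i * (β⁻¹ * β) := by noncomm_ring
    rw [e, mul_nonsing_inv _ hαdet, nonsing_inv_mul _ hβdet, one_mul, mul_one]
  · set X : Fin n → Matrix (Fin N) (Fin N) ℂ := fun i => α⁻¹ * α⁻¹ * b i with hX
    set Y : Fin n → Matrix (Fin N) (Fin N) ℂ := fun i => b i * (β⁻¹ * β⁻¹) with hY
    have hper : ∀ i, ((α⁻¹ * b i * β⁻¹)ᴴ * (α⁻¹ * b i * β⁻¹)).trace.re ≤
        (((X i)ᴴ * X i).trace.re + ((Y i)ᴴ * Y i).trace.re) / 2 := by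
      intro i
      have h := aux_half (X i) (Y i)
      have e : ((X i)ᴴ * Y i).trace = ((α⁻¹ * b i * β⁻¹)ᴴ * (α⁻¹ * b i * β⁻¹)).trace := by
        have eR : (α⁻¹ * b i * β⁻¹)ᴴ * (α⁻¹ * b i * β⁻¹) =
            β⁻¹ * ((b i)ᴴ * (α⁻¹ * (α⁻¹ * (b i * β⁻¹)))) := by
          simp only [conjTranspose_mul, eα, eβ, mul_assoc]
        rw [eR, Matrix.trace_mul_comm β⁻¹]
        simp only [hX, hY, conjTranspose_mul, eα, mul_assoc]
      rw [e] at h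
      exact h
    have p4 : ∀ M : Matrix (Fin N) (Fin N) ℂ, M ^ 4 = M * M * (M * M) := fun M => by
      rw [(by norm_num : (4 : ℕ) = 2 * 2), pow_mul, pow_two, pow_two]
    have hXsum : ∑ i, ((X i)ᴴ * X i).trace = ((α⁻¹) ^ 4 * (sr * sr)).trace := by
      have e : ∀ i, ((X i)ᴴ * X i).trace = ((α⁻¹) ^ 4 * (b i * (b i)ᴴ)).trace := by
        intro i
        calc ((X i)ᴴ * X i).trace
            = ((b i)ᴴ * (α⁻¹ * (α⁻¹ * (α⁻¹ * (α⁻¹ * b i))))).trace := by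
              simp only [hX, conjTranspose_mul, eα, mul_assoc]
          _ = ((α⁻¹) ^ 4 * (b i * (b i)ᴴ)).trace := by
              conv_lhs => rw [Matrix.trace_mul_comm]
              rw [p4]; simp only [mul_assoc]
      rw [Finset.sum_congr rfl fun i _ => e i, ← Matrix.trace_sum, ← Finset.mul_sum, ← hsr2]
    have hYsum : ∑ i, ((Y i)ᴴ * Y i).trace = ((β⁻¹) ^ 4 * (sc * sc)).trace := by
      have e : ∀ i, ((Y i)ᴴ * Y i).trace = ((β⁻¹) ^ 4 * ((b i)ᴴ * b i)).trace := by
        intro i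
        calc ((Y i)ᴴ * Y i).trace
            = (β⁻¹ * (β⁻¹ * ((b i)ᴴ * (b i * (β⁻¹ * β⁻¹))))).trace := by
              simp only [hY, conjTranspose_mul, eβ, mul_assoc]
          _ = ((β⁻¹) ^ 4 * ((b i)ᴴ * b i)).trace := by
              conv_lhs => rw [Matrix.trace_mul_comm]
              conv_lhs => simp only [mul_assoc]
              conv_lhs => rw [Matrix.trace_mul_comm]
              conv_rhs => rw [Matrix.trace_mul_comm, p4]
              simp only [mul_assoc]
      rw [Finset.sum_congr rfl fun i _ => e i, ← Matrix.trace_sum, ← Finset.mul_sum, ← hsc2]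
    have hXle : (((α⁻¹) ^ 4 * (sr * sr)).trace).re ≤ (Matrix.trace sr).re :=
      aux_key hδ hsr hα hαdet hα4
    have hYle : (((β⁻¹) ^ 4 * (sc * sc)).trace).re ≤ (Matrix.trace sc).re :=
      aux_key hδ hsc hβ hβdet hβ4
    have hXsum' : ∑ i, ((X i)ᴴ * X i).trace.re = (((α⁻¹) ^ 4 * (sr * sr)).trace).re := by
      rw [← Complex.re_sum, hXsum]
    have hYsum' : ∑ i, ((Y i)ᴴ * Y i).trace.re = (((β⁻¹) ^ 4 * (sc * sc)).trace).re := by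
      rw [← Complex.re_sum, hYsum]
    calc ∑ i, ((α⁻¹ * b i * β⁻¹)ᴴ * (α⁻¹ * b i * β⁻¹)).trace.re
        ≤ ∑ i, (((X i)ᴴ * X i).trace.re + ((Y i)ᴴ * Y i).trace.re) / 2 :=
          Finset.sum_le_sum fun i _ => hper i
      _ = (∑ i, ((X i)ᴴ * X i).trace.re + ∑ i, ((Y i)ᴴ * Y i).trace.re) / 2 := by
          rw [← Finset.sum_div, Finset.sum_add_distrib]
      _ ≤ ((Matrix.trace sr).re + (Matrix.trace sc).re) / 2 := by
          rw [hXsum', hYsum']; linarith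
      _ ≤ max (Matrix.trace sr).re (Matrix.trace sc).re := by
          cases le_total (Matrix.trace sr).re (Matrix.trace sc).re with
          | inl h => rw [max_eq_right h]; linarith
          | inr h => rw [max_eq_left h]; linarith
end
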